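/- arXiv:1412.8126 — 2 statements merged into one kernel-verified Lean document; each statement's English description precedes it below -/
import Mathlib

section
/- For a convex superlinear L : ℝⁿ → ℝ and Lipschitz f, the Hopf–Lax function u(y,t) = inf_x ( f(x) + t·L((y−x)/t) ) satisfies the semigroup property: for 0 < s < t, u(y,t) = inf_z ( u(z,s) + (t−s)·L((y−z)/(t−s)) ). -/
open Set

/-! The cost `t L((y - x)/t)` of moving from `x` to `y` in time `t` is the perspective of `L`,
which is subadditive by convexity; the straight path at constant speed realises equality, so
composing the two infima over `x` and over the intermediate point `z` gives back a single one.
Superlinearity and the Lipschitz bound keep all infima finite: `L v ≥ K ‖v‖ - c` absorbs the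
variation of `f`, so every `f x + t L((y - x)/t)` is at least `f y - t c`. -/

variable {E : Type*} [NormedAddCommGroup E]

theorem Continuous.exists_mul_norm_sub_le [ProperSpace E] {L : E → ℝ} (hL : Continuous L)
    {C R : ℝ} (hR : ∀ v : E, R ≤ ‖v‖ → C * ‖v‖ ≤ L v) :
    ∃ c : ℝ, ∀ v : E, C * ‖v‖ - c ≤ L v := by
  obtain ⟨c, hc⟩ := (isCompact_closedBall (0 : E) R).bddAbove_image
    (f := fun v => C * ‖v‖ - L v) (by fun_prop)
  refine ⟨max c 0, fun v => ?_⟩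
  rcases le_total ‖v‖ R with hv | hv
  · have := hc (mem_image_of_mem _ (mem_closedBall_zero_iff.mpr hv))
    linarith [le_max_left c 0]
  · linarith [hR v hv, le_max_right c 0]

variable [NormedSpace ℝ E]

theorem ConvexOn.perspective_add_le {L : E → ℝ} (hL : ConvexOn ℝ univ L) {a b : ℝ}
    (ha : 0 < a) (hb : 0 < b) (v w : E) :
    (a + b) * L ((a + b)⁻¹ • (v + w)) ≤ a * L (a⁻¹ • v) + b * L (b⁻¹ • w) := by
  have hab : 0 < a + b := add_pos ha hb
  have hcomb := hL.2 (mem_univ (a⁻¹ • v)) (mem_univ (b⁻¹ • w))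
    (div_pos ha hab).le (div_pos hb hab).le (by field_simp)
  have hpt : (a / (a + b)) • a⁻¹ • v + (b / (a + b)) • b⁻¹ • w = (a + b)⁻¹ • (v + w) := by
    simp only [smul_smul, smul_add]
    congr 2 <;> field_simp
  rw [hpt] at hcomb
  calc (a + b) * L ((a + b)⁻¹ • (v + w))
      ≤ (a + b) * (a / (a + b) * L (a⁻¹ • v) + b / (a + b) * L (b⁻¹ • w)) :=
        mul_le_mul_of_nonneg_left hcomb hab.le
    _ = a * L (a⁻¹ • v) + b * L (b⁻¹ • w) := by field_simp

noncomputable def hopfLax (f L : E → ℝ) (t : ℝ) (y : E) : ℝ :=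
  ⨅ x, f x + t * L (t⁻¹ • (y - x))

theorem sInf_setOf_exists_eq {α β : Type*} [InfSet β] (g : α → β) :
    sInf {A : β | ∃ x, A = g x} = ⨅ x, g x := by
  simp only [iInf, range, eq_comm]

section HopfLax

variable {f L : E → ℝ} {K : NNReal} {c : ℝ}

theorem LipschitzWith.sub_mul_le_add_mul (hf : LipschitzWith K f) (hc : ∀ v, K * ‖v‖ - c ≤ L v)
    {t : ℝ} (ht : 0 < t) (x y : E) :
    f y - t * c ≤ f x + t * L (t⁻¹ • (y - x)) := by
  have hnorm : t * ‖t⁻¹ • (y - x)‖ = ‖y - x‖ := by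
    rw [norm_smul, norm_inv, Real.norm_of_nonneg ht.le, mul_inv_cancel_left₀ ht.ne']
  have hfxy : f y - f x ≤ K * ‖y - x‖ := by
    simpa only [Real.dist_eq, dist_eq_norm] using (abs_le.mp (hf.dist_le_mul y x)).2
  have := mul_le_mul_of_nonneg_left (hc (t⁻¹ • (y - x))) ht.le
  nlinarith

theorem LipschitzWith.bddBelow_range_hopfLax (hf : LipschitzWith K f)
    (hc : ∀ v, K * ‖v‖ - c ≤ L v) {t : ℝ} (ht : 0 < t) (y : E) :
    BddBelow (range fun x => f x + t * L (t⁻¹ • (y - x))) :=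
  ⟨f y - t * c, forall_mem_range.mpr fun x => hf.sub_mul_le_add_mul hc ht x y⟩

theorem LipschitzWith.sub_mul_le_hopfLax (hf : LipschitzWith K f)
    (hc : ∀ v, K * ‖v‖ - c ≤ L v) {t : ℝ} (ht : 0 < t) (y : E) :
    f y - t * c ≤ hopfLax f L t y :=
  le_ciInf fun x => hf.sub_mul_le_add_mul hc ht x y

theorem LipschitzWith.hopfLax_le (hf : LipschitzWith K f)
    (hc : ∀ v, K * ‖v‖ - c ≤ L v) {t : ℝ} (ht : 0 < t) (x y : E) :
    hopfLax f L t y ≤ f x + t * L (t⁻¹ • (y - x)) :=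
  ciInf_le (hf.bddBelow_range_hopfLax hc ht y) x

theorem LipschitzWith.hopfLax_hopfLax (hf : LipschitzWith K f) (hc : ∀ v, K * ‖v‖ - c ≤ L v)
    (hL : ConvexOn ℝ univ L) {s r : ℝ} (hs : 0 < s) (hr : 0 < r) (y : E) :
    hopfLax (hopfLax f L s) L r y = hopfLax f L (s + r) y := by
  have hbdd : BddBelow (range fun z => hopfLax f L s z + r * L (r⁻¹ • (y - z))) := by
    refine ⟨f y - r * c - s * c, forall_mem_range.mpr fun z => ?_⟩
    linarith [hf.sub_mul_le_hopfLax hc hs z, hf.sub_mul_le_add_mul hc hr z y]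
  refine le_antisymm (le_ciInf fun x => ?_) (le_ciInf fun z => ?_)
  · -- the point reached at time `s` on the straight path from `x` to `y`
    set z := x + (s / (s + r)) • (y - x)
    have hsr : s + r ≠ 0 := (add_pos hs hr).ne'
    have hzx : s⁻¹ • (z - x) = (s + r)⁻¹ • (y - x) := by
      simp only [z, add_sub_cancel_left, smul_smul]
      field_simp
    have hyz : r⁻¹ • (y - z) = (s + r)⁻¹ • (y - x) := by
      have : y - z = (r / (s + r)) • (y - x) := by
        simp only [z]
        rw [show r / (s + r) = 1 - s / (s + r) by field_simp; ring, sub_smul, one_smul]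
        abel
      rw [this, smul_smul]
      field_simp
    calc hopfLax (hopfLax f L s) L r y ≤ hopfLax f L s z + r * L (r⁻¹ • (y - z)) :=
          ciInf_le hbdd z
      _ ≤ f x + s * L (s⁻¹ • (z - x)) + r * L (r⁻¹ • (y - z)) := by
          gcongr; exact hf.hopfLax_le hc hs x z
      _ = f x + (s + r) * L ((s + r)⁻¹ • (y - x)) := by rw [hzx, hyz]; ring
  · rw [← sub_le_iff_le_add]
    refine le_ciInf fun x => ?_
    have hsplit := hL.perspective_add_le hs hr (z - x) (y - z)
    rw [sub_add_sub_cancel'] at hsplit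
    linarith [hf.hopfLax_le hc (add_pos hs hr) x y]

end HopfLax

/-- Semigroup property of the Hopf–Lax formula: for `0 < s < t`,
`u y t = inf_z ( u z s + (t−s) L((y−z)/(t−s)) )`. -/
theorem hopfLax_semigroup {n : ℕ}
    (L : EuclideanSpace ℝ (Fin n) → ℝ)
    (hLconv : ConvexOn ℝ univ L)
    (hLsuper : ∀ C : ℝ, ∃ R : ℝ, ∀ v : EuclideanSpace ℝ (Fin n), R ≤ ‖v‖ → C * ‖v‖ ≤ L v)
    (f : EuclideanSpace ℝ (Fin n) → ℝ) (K : NNReal) (hf : LipschitzWith K f)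
    (u : EuclideanSpace ℝ (Fin n) → ℝ → ℝ)
    (hu : ∀ y t, 0 < t →
      u y t = sInf {A : ℝ | ∃ x : EuclideanSpace ℝ (Fin n), A = f x + t * L (t⁻¹ • (y - x))}) :
    ∀ (y : EuclideanSpace ℝ (Fin n)) (s t : ℝ), 0 < s → s < t →
      u y t = sInf {A : ℝ | ∃ z : EuclideanSpace ℝ (Fin n),
        A = u z s + (t - s) * L ((t - s)⁻¹ • (y - z))} := by
  intro y s t hs hst
  have hLcont : Continuous L := continuousOn_univ.mp (hLconv.continuousOn isOpen_univ)
  obtain ⟨R, hR⟩ := hLsuper K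
  obtain ⟨c, hc⟩ := hLcont.exists_mul_norm_sub_le hR
  have hu' : ∀ z τ, 0 < τ → u z τ = hopfLax f L τ z := fun z τ hτ =>
    (hu z τ hτ).trans (sInf_setOf_exists_eq _)
  have hus : ∀ z, u z s = hopfLax f L s z := fun z => hu' z s hs
  simp only [hus, sInf_setOf_exists_eq]
  have hcompose := hf.hopfLax_hopfLax hc hLconv hs (sub_pos.mpr hst) y
  rw [add_sub_cancel] at hcompose
  rw [hu' y t (hs.trans hst), ← hcompose]
  rfl
end

section
/- With Φ_k as above and k ≥ c(L): if Φ_k is finite then Φ_k(x,y) + Φ_k(y,x) ≥ 0 for all x,y (so the symmetrization d_k(x,y) = Φ_k(x,y) + Φ_k(y,x) is a pseudo-metric), and for k < c(L) one has Φ_k ≡ −∞ on some pair of points. -/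
/-!
Actions add under concatenation up to an arbitrarily small error. Concatenating two `C¹` curves
needs matching velocities at the junction; inserting a loop `t ↦ x + τ • h (t / τ)`, with `h` a
cubic Hermite curve carrying the two velocities, costs action `O(τ)`.

The action of a fixed curve is affine in `k` with slope `T > 0`, so the set of `k` for which every
loop has nonnegative action is closed and upward closed, hence contains its infimum `c`. For
`k ≥ c`, joining a curve `x → y` to a curve `y → x` gives a loop, so `Φ_k(x,y) + Φ_k(y,x) ≥ 0`.
For `k < c` some loop has negative action, and running around it `m` times sends the action at
its base point to `-∞`.
-/

open Set intervalIntegral MeasureTheory Topology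
open scoped Interval

theorem Real.sInf_add_sInf_nonneg {s t : Set ℝ} (hs : s.Nonempty) (ht : t.Nonempty)
    (h : ∀ a ∈ s, ∀ b ∈ t, 0 ≤ a + b) : 0 ≤ sInf s + sInf t := by
  have hneg : -sInf s ≤ sInf t :=
    le_csInf ht fun b hb => neg_le.1 (le_csInf hs fun a ha => by linarith [h a ha b hb])
  linarith

namespace Lagrangian

section Append

variable {E : Type*} {γ₁ γ₂ : ℝ → E} {t T₁ T₂ : ℝ}

noncomputable def append (T₁ : ℝ) (γ₁ γ₂ : ℝ → E) (t : ℝ) : E :=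
  if t ≤ T₁ then γ₁ t else γ₂ (t - T₁)

theorem append_of_le (h : t ≤ T₁) : append T₁ γ₁ γ₂ t = γ₁ t := if_pos h

theorem append_of_ge (hv : γ₁ T₁ = γ₂ 0) (h : T₁ ≤ t) : append T₁ γ₁ γ₂ t = γ₂ (t - T₁) := by
  rcases h.eq_or_lt with rfl | h
  · simp [append, hv]
  · exact if_neg h.not_ge

theorem append_add (hv : γ₁ T₁ = γ₂ 0) (hT₂ : 0 ≤ T₂) : append T₁ γ₁ γ₂ (T₁ + T₂) = γ₂ T₂ := by
  rw [append_of_ge hv (le_add_of_nonneg_right hT₂), add_sub_cancel_left]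

theorem continuousOn_append [TopologicalSpace E] (hγ₁ : ContinuousOn γ₁ (Icc 0 T₁))
    (hγ₂ : ContinuousOn γ₂ (Icc 0 T₂)) (hv : γ₁ T₁ = γ₂ 0) :
    ContinuousOn (append T₁ γ₁ γ₂) (Icc 0 (T₁ + T₂)) := by
  have hγ₂' : ContinuousOn (fun t => γ₂ (t - T₁)) (Icc T₁ (T₁ + T₂)) :=
    hγ₂.comp (continuousOn_id.sub continuousOn_const) fun t ht =>
      ⟨by linarith [ht.1], by linarith [ht.2]⟩
  refine ContinuousOn.if (fun t ht => ?_) (hγ₁.mono fun t ht => ?_) (hγ₂'.mono fun t ht => ?_)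
  · rw [show {t : ℝ | t ≤ T₁} = Iic T₁ from rfl, frontier_Iic] at ht
    obtain rfl : t = T₁ := ht.2
    simp [hv]
  · rw [show {t : ℝ | t ≤ T₁} = Iic T₁ from rfl, closure_Iic] at ht
    exact ⟨ht.1.1, ht.2⟩
  · rw [show {t : ℝ | ¬t ≤ T₁} = Ioi T₁ by ext; simp, closure_Ioi] at ht
    exact ⟨ht.2, ht.1.2⟩

end Append

variable {F : Type*} [NormedAddCommGroup F] [NormedSpace ℝ F]
  {L : F → F → ℝ} {γ γ₁ γ₂ : ℝ → F} {a b k T T₁ T₂ : ℝ}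

noncomputable def action (L : F → F → ℝ) (k T : ℝ) (γ : ℝ → F) : ℝ :=
  ∫ t in (0 : ℝ)..T, (L (γ t) (deriv γ t) + k)

def actionSet (L : F → F → ℝ) (k : ℝ) (x y : F) : Set ℝ :=
  {A | ∃ (T : ℝ) (γ : ℝ → F), 0 < T ∧ ContDiffOn ℝ 1 γ (Icc 0 T) ∧ γ 0 = x ∧ γ T = y ∧
    A = action L k T γ}

/-- `c(L)` is the infimum of this set. -/
def loopNonnegLevels (L : F → F → ℝ) : Set ℝ :=
  {k | ∀ (T : ℝ) (γ : ℝ → F), 0 < T → ContDiffOn ℝ 1 γ (Icc 0 T) → γ 0 = γ T →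
    0 ≤ action L k T γ}

theorem intervalIntegrable_lagrangian (hL : Continuous (Function.uncurry L)) (hab : a < b)
    (hγ : ContDiffOn ℝ 1 γ (Icc a b)) :
    IntervalIntegrable (fun t => L (γ t) (deriv γ t) + k) volume a b := by
  have hcont : ContinuousOn (fun t => L (γ t) (derivWithin γ (Icc a b) t) + k) (Icc a b) :=
    (hL.comp_continuousOn (hγ.continuousOn.prodMk
      (hγ.continuousOn_derivWithin (uniqueDiffOn_Icc hab) le_rfl))).add continuousOn_const
  rw [intervalIntegrable_iff_integrableOn_Ioo_of_le hab.le]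
  refine (hcont.integrableOn_Icc.mono_set Ioo_subset_Icc_self).congr_fun (fun t ht => ?_)
    measurableSet_Ioo
  simp only [derivWithin_of_mem_nhds (Icc_mem_nhds ht.1 ht.2)]

theorem action_eq_add_mul (hL : Continuous (Function.uncurry L)) (hT : 0 < T)
    (hγ : ContDiffOn ℝ 1 γ (Icc 0 T)) (k k' : ℝ) :
    action L k' T γ = action L k T γ + (k' - k) * T := by
  have hsplit : (fun t => L (γ t) (deriv γ t) + k') =
      fun t => (L (γ t) (deriv γ t) + k) + (k' - k) := by
    funext t; ring
  rw [action, action, hsplit,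
    integral_add (intervalIntegrable_lagrangian hL hT hγ) intervalIntegrable_const,
    intervalIntegral.integral_const, smul_eq_mul]
  ring

theorem hasDerivWithinAt_append (hγ₁ : ContDiffOn ℝ 1 γ₁ (Icc 0 T₁))
    (hγ₂ : ContDiffOn ℝ 1 γ₂ (Icc 0 T₂)) (hT₁ : 0 ≤ T₁) (hT₂ : 0 ≤ T₂) (hv : γ₁ T₁ = γ₂ 0)
    (hd : derivWithin γ₁ (Icc 0 T₁) T₁ = derivWithin γ₂ (Icc 0 T₂) 0)
    {t : ℝ} (ht : t ∈ Icc 0 (T₁ + T₂)) :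
    HasDerivWithinAt (append T₁ γ₁ γ₂)
      (append T₁ (derivWithin γ₁ (Icc 0 T₁)) (derivWithin γ₂ (Icc 0 T₂)) t)
      (Icc 0 (T₁ + T₂)) t := by
  rw [← Icc_union_Icc_eq_Icc hT₁ (le_add_of_nonneg_right hT₂)]
  refine HasDerivWithinAt.union ?_ ?_
  · by_cases h : t ≤ T₁
    · rw [append_of_le h]
      exact ((hγ₁.differentiableOn one_ne_zero t ⟨ht.1, h⟩).hasDerivWithinAt).congr
        (fun u hu => append_of_le hu.2) (append_of_le h)
    · exact HasFDerivWithinAt.of_notMem_closure (by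
        rw [closure_Icc]; exact fun hm => h hm.2)
  · by_cases h : T₁ ≤ t
    · rw [append_of_ge hd h]
      have hsub : HasDerivWithinAt (fun u : ℝ => u - T₁) 1 (Icc T₁ (T₁ + T₂)) t :=
        ((hasDerivAt_id t).sub_const T₁).hasDerivWithinAt
      have hγ₂t := (hγ₂.differentiableOn one_ne_zero (t - T₁)
        ⟨by linarith, by linarith [ht.2]⟩).hasDerivWithinAt
      have := hγ₂t.scomp t hsub (by
        intro u hu; exact ⟨by linarith [hu.1], by linarith [hu.2]⟩)
      rw [one_smul] at this
      exact this.congr (fun u hu => append_of_ge hv hu.1) (append_of_ge hv h)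
    · exact HasFDerivWithinAt.of_notMem_closure (by
        rw [closure_Icc]; exact fun hm => h hm.1)

theorem contDiffOn_append (hγ₁ : ContDiffOn ℝ 1 γ₁ (Icc 0 T₁))
    (hγ₂ : ContDiffOn ℝ 1 γ₂ (Icc 0 T₂)) (hT₁ : 0 < T₁) (hT₂ : 0 < T₂) (hv : γ₁ T₁ = γ₂ 0)
    (hd : derivWithin γ₁ (Icc 0 T₁) T₁ = derivWithin γ₂ (Icc 0 T₂) 0) :
    ContDiffOn ℝ 1 (append T₁ γ₁ γ₂) (Icc 0 (T₁ + T₂)) := by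
  have hder := fun t (ht : t ∈ Icc 0 (T₁ + T₂)) =>
    hasDerivWithinAt_append hγ₁ hγ₂ hT₁.le hT₂.le hv hd ht
  rw [contDiffOn_one_iff_derivWithin (uniqueDiffOn_Icc (add_pos hT₁ hT₂))]
  refine ⟨fun t ht => (hder t ht).differentiableWithinAt, ?_⟩
  refine (continuousOn_append (hγ₁.continuousOn_derivWithin (uniqueDiffOn_Icc hT₁) le_rfl)
    (hγ₂.continuousOn_derivWithin (uniqueDiffOn_Icc hT₂) le_rfl) hd).congr fun t ht => ?_
  exact (hder t ht).derivWithin (uniqueDiffOn_Icc (add_pos hT₁ hT₂) t ht)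

theorem derivWithin_append_zero (hγ₁ : ContDiffOn ℝ 1 γ₁ (Icc 0 T₁))
    (hγ₂ : ContDiffOn ℝ 1 γ₂ (Icc 0 T₂)) (hT₁ : 0 < T₁) (hT₂ : 0 < T₂) (hv : γ₁ T₁ = γ₂ 0)
    (hd : derivWithin γ₁ (Icc 0 T₁) T₁ = derivWithin γ₂ (Icc 0 T₂) 0) :
    derivWithin (append T₁ γ₁ γ₂) (Icc 0 (T₁ + T₂)) 0 = derivWithin γ₁ (Icc 0 T₁) 0 := by
  have h0 : (0 : ℝ) ∈ Icc 0 (T₁ + T₂) := left_mem_Icc.2 (add_pos hT₁ hT₂).le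
  rw [(hasDerivWithinAt_append hγ₁ hγ₂ hT₁.le hT₂.le hv hd h0).derivWithin
    (uniqueDiffOn_Icc (add_pos hT₁ hT₂) 0 h0), append_of_le hT₁.le]

theorem action_append (hL : Continuous (Function.uncurry L))
    (hγ₁ : ContDiffOn ℝ 1 γ₁ (Icc 0 T₁)) (hγ₂ : ContDiffOn ℝ 1 γ₂ (Icc 0 T₂))
    (hT₁ : 0 < T₁) (hT₂ : 0 < T₂) (hv : γ₁ T₁ = γ₂ 0)
    (hd : derivWithin γ₁ (Icc 0 T₁) T₁ = derivWithin γ₂ (Icc 0 T₂) 0) :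
    action L k (T₁ + T₂) (append T₁ γ₁ γ₂) = action L k T₁ γ₁ + action L k T₂ γ₂ := by
  have hγ := contDiffOn_append hγ₁ hγ₂ hT₁ hT₂ hv hd
  have hT : T₁ < T₁ + T₂ := lt_add_of_pos_right T₁ hT₂
  rw [action, ← integral_add_adjacent_intervals
    (intervalIntegrable_lagrangian hL hT₁ (hγ.mono (Icc_subset_Icc le_rfl hT.le)))
    (intervalIntegrable_lagrangian hL hT (hγ.mono (Icc_subset_Icc hT₁.le le_rfl)))]
  congr 1
  · refine integral_congr_Ioo_of_le hT₁.le fun t ht => ?_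
    have hev : append T₁ γ₁ γ₂ =ᶠ[𝓝 t] γ₁ :=
      Filter.eventually_of_mem (Iio_mem_nhds ht.2) fun u hu => append_of_le hu.le
    simp only [hev.deriv_eq, hev.eq_of_nhds]
  · have hshift := integral_comp_sub_right (a := T₁) (b := T₁ + T₂)
      (fun t => L (γ₂ t) (deriv γ₂ t) + k) T₁
    rw [sub_self, add_sub_cancel_left] at hshift
    rw [action, ← hshift]
    refine integral_congr_Ioo_of_le hT.le fun t ht => ?_
    have hev : append T₁ γ₁ γ₂ =ᶠ[𝓝 t] fun u => γ₂ (u - T₁) :=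
      Filter.eventually_of_mem (Ioi_mem_nhds ht.1) fun u hu => append_of_ge hv hu.le
    simp only [hev.deriv_eq, hev.eq_of_nhds, deriv_comp_sub_const]

/-- The cubic Hermite curve with `h 0 = h 1 = 0`, `h' 0 = v₁` and `h' 1 = v₂`. -/
noncomputable def hermite (v₁ v₂ : F) (s : ℝ) : F :=
  (s - 2 * s ^ 2 + s ^ 3) • v₁ + (s ^ 3 - s ^ 2) • v₂

/-- The cubic Hermite curve with `h 0 = h 1 = 0`, `h' 0 = v₁` and `h' 1 = v₂`. -/
noncomputable def hermiteDeriv (v₁ v₂ : F) (s : ℝ) : F :=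
  (1 - 4 * s + 3 * s ^ 2) • v₁ + (3 * s ^ 2 - 2 * s) • v₂

theorem hasDerivAt_hermite (v₁ v₂ : F) (s : ℝ) :
    HasDerivAt (hermite v₁ v₂) (hermiteDeriv v₁ v₂ s) s := by
  have h₁ : HasDerivAt (fun s : ℝ => s - 2 * s ^ 2 + s ^ 3) (1 - 4 * s + 3 * s ^ 2) s := by
    refine (((hasDerivAt_id' s).sub ((hasDerivAt_pow 2 s).const_mul 2)).add
      (hasDerivAt_pow 3 s)).congr_deriv ?_
    norm_num
    ring
  have h₂ : HasDerivAt (fun s : ℝ => s ^ 3 - s ^ 2) (3 * s ^ 2 - 2 * s) s := by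
    refine ((hasDerivAt_pow 3 s).sub (hasDerivAt_pow 2 s)).congr_deriv ?_
    norm_num
  exact (h₁.smul_const v₁).add (h₂.smul_const v₂)

/-- The cubic Hermite curve with `h 0 = h 1 = 0`, `h' 0 = v₁` and `h' 1 = v₂`. -/
noncomputable def hermiteLoop (τ : ℝ) (x v₁ v₂ : F) (t : ℝ) : F :=
  x + τ • hermite v₁ v₂ (t / τ)

variable {τ : ℝ} {x v₁ v₂ : F}

theorem hasDerivAt_hermiteLoop (hτ : τ ≠ 0) (t : ℝ) :
    HasDerivAt (hermiteLoop τ x v₁ v₂) (hermiteDeriv v₁ v₂ (t / τ)) t := by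
  have := (((hasDerivAt_hermite v₁ v₂ (t / τ)).scomp t
    ((hasDerivAt_id' t).div_const τ)).const_smul τ).const_add x
  rwa [smul_smul, mul_one_div_cancel hτ, one_smul] at this

theorem contDiff_hermiteLoop : ContDiff ℝ 1 (hermiteLoop τ x v₁ v₂) := by
  unfold hermiteLoop hermite
  fun_prop

theorem hermiteLoop_zero : hermiteLoop τ x v₁ v₂ 0 = x := by
  simp [hermiteLoop, hermite]

theorem hermiteLoop_self (hτ : τ ≠ 0) : hermiteLoop τ x v₁ v₂ τ = x := by
  norm_num [hermiteLoop, hermite, div_self hτ]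

theorem derivWithin_hermiteLoop (hτ : 0 < τ) {t : ℝ} (ht : t ∈ Icc 0 τ) :
    derivWithin (hermiteLoop τ x v₁ v₂) (Icc 0 τ) t = hermiteDeriv v₁ v₂ (t / τ) :=
  (hasDerivAt_hermiteLoop hτ.ne' t).hasDerivWithinAt.derivWithin (uniqueDiffOn_Icc hτ t ht)

theorem exists_action_hermiteLoop_le (hL : Continuous (Function.uncurry L)) (x v₁ v₂ : F)
    (k : ℝ) {ε : ℝ} (hε : 0 < ε) : ∃ τ, 0 < τ ∧ action L k τ (hermiteLoop τ x v₁ v₂) ≤ ε := by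
  obtain ⟨M, hM⟩ := (isCompact_Icc (a := (0 : ℝ)) (b := 1)).prod
    (isCompact_Icc (a := (0 : ℝ)) (b := 1)) |>.exists_bound_of_continuousOn
    (f := fun p : ℝ × ℝ => L (x + p.1 • hermite v₁ v₂ p.2) (hermiteDeriv v₁ v₂ p.2))
    (hL.comp (show Continuous fun p : ℝ × ℝ =>
      (x + p.1 • hermite v₁ v₂ p.2, hermiteDeriv v₁ v₂ p.2) by
        unfold hermite hermiteDeriv; fun_prop)).continuousOn
  set C := |M| + |k| + 1
  have hC : 0 < C := by positivity
  set τ := min 1 (ε / C)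
  have hτ : 0 < τ := lt_min one_pos (div_pos hε hC)
  refine ⟨τ, hτ, ?_⟩
  have hbound : ∀ t ∈ Ι 0 τ,
      ‖L (hermiteLoop τ x v₁ v₂ t) (deriv (hermiteLoop τ x v₁ v₂) t) + k‖ ≤ C := by
    intro t ht
    rw [uIoc_of_le hτ.le] at ht
    have hs : t / τ ∈ Icc (0 : ℝ) 1 := ⟨div_nonneg ht.1.le hτ.le, div_le_one_of_le₀ ht.2 hτ.le⟩
    have hMt : ‖L (hermiteLoop τ x v₁ v₂ t) (hermiteDeriv v₁ v₂ (t / τ))‖ ≤ M :=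
      hM (τ, t / τ) ⟨⟨hτ.le, min_le_left _ _⟩, hs⟩
    rw [(hasDerivAt_hermiteLoop hτ.ne' t).deriv]
    refine (norm_add_le _ _).trans ?_
    rw [Real.norm_eq_abs k]
    linarith [le_abs_self M]
  calc action L k τ (hermiteLoop τ x v₁ v₂)
      ≤ ‖action L k τ (hermiteLoop τ x v₁ v₂)‖ := Real.le_norm_self _
    _ ≤ C * |τ - 0| := norm_integral_le_of_norm_le_const hbound
    _ ≤ C * (ε / C) := by
        rw [sub_zero, abs_of_pos hτ]
        exact mul_le_mul_of_nonneg_left (min_le_right _ _) hC.le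
    _ = ε := mul_div_cancel₀ ε hC.ne'

theorem exists_prepend_action_le (hL : Continuous (Function.uncurry L)) (hT : 0 < T)
    (hγ : ContDiffOn ℝ 1 γ (Icc 0 T)) (v : F) (k : ℝ) {ε : ℝ} (hε : 0 < ε) :
    ∃ T' γ', 0 < T' ∧ ContDiffOn ℝ 1 γ' (Icc 0 T') ∧ γ' 0 = γ 0 ∧ γ' T' = γ T ∧
      derivWithin γ' (Icc 0 T') 0 = v ∧ action L k T' γ' ≤ action L k T γ + ε := by
  obtain ⟨τ, hτ, hact⟩ := exists_action_hermiteLoop_le hL (γ 0) v (derivWithin γ (Icc 0 T) 0) k hε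
  set β := hermiteLoop τ (γ 0) v (derivWithin γ (Icc 0 T) 0)
  have hβ : ContDiffOn ℝ 1 β (Icc 0 τ) := contDiff_hermiteLoop.contDiffOn
  have hv : β τ = γ 0 := hermiteLoop_self hτ.ne'
  have hd : derivWithin β (Icc 0 τ) τ = derivWithin γ (Icc 0 T) 0 := by
    rw [derivWithin_hermiteLoop hτ (right_mem_Icc.2 hτ.le), div_self hτ.ne']
    norm_num [hermiteDeriv]
  refine ⟨τ + T, append τ β γ, add_pos hτ hT, contDiffOn_append hβ hγ hτ hT hv hd,
    (append_of_le hτ.le).trans hermiteLoop_zero, append_add hv hT.le, ?_, ?_⟩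
  · rw [derivWithin_append_zero hβ hγ hτ hT hv hd,
      derivWithin_hermiteLoop hτ (left_mem_Icc.2 hτ.le)]
    simp [hermiteDeriv]
  · rw [action_append hL hβ hγ hτ hT hv hd]
    linarith

variable {A B ε c : ℝ} {y z : F}

theorem exists_mem_actionSet_le_add (hL : Continuous (Function.uncurry L))
    (hA : A ∈ actionSet L k x y) (hB : B ∈ actionSet L k y z) (hε : 0 < ε) :
    ∃ C ∈ actionSet L k x z, C ≤ A + B + ε := by
  obtain ⟨T₁, γ₁, hT₁, hγ₁, rfl, rfl, rfl⟩ := hA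
  obtain ⟨T₂, γ₂, hT₂, hγ₂, hy, rfl, rfl⟩ := hB
  obtain ⟨T, γ, hT, hγ, hγ0, hγT, hd, hact⟩ :=
    exists_prepend_action_le hL hT₂ hγ₂ (derivWithin γ₁ (Icc 0 T₁) T₁) k hε
  have hv : γ₁ T₁ = γ 0 := (hγ0.trans hy).symm
  refine ⟨_, ⟨T₁ + T, append T₁ γ₁ γ, add_pos hT₁ hT,
    contDiffOn_append hγ₁ hγ hT₁ hT hv hd.symm, append_of_le hT₁.le,
    (append_add hv hT.le).trans hγT, rfl⟩, ?_⟩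
  rw [action_append hL hγ₁ hγ hT₁ hT hv hd.symm]
  linarith

theorem nonneg_of_mem_actionSet_self (hk : k ∈ loopNonnegLevels L)
    (hA : A ∈ actionSet L k x x) : 0 ≤ A := by
  obtain ⟨T, γ, hT, hγ, h0, hT', rfl⟩ := hA
  exact hk T γ hT hγ (h0.trans hT'.symm)

theorem add_nonneg_of_mem_actionSet (hL : Continuous (Function.uncurry L))
    (hk : k ∈ loopNonnegLevels L) (hA : A ∈ actionSet L k x y) (hB : B ∈ actionSet L k y x) :
    0 ≤ A + B := by
  refine le_of_forall_pos_le_add fun ε hε => ?_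
  obtain ⟨C, hC, hCle⟩ := exists_mem_actionSet_le_add hL hA hB hε
  linarith [nonneg_of_mem_actionSet_self hk hC]

theorem mem_loopNonnegLevels_of_le (hL : Continuous (Function.uncurry L))
    (hk : k ∈ loopNonnegLevels L) {k' : ℝ} (hkk' : k ≤ k') : k' ∈ loopNonnegLevels L := by
  intro T γ hT hγ hloop
  rw [action_eq_add_mul hL hT hγ k k']
  exact add_nonneg (hk T γ hT hγ hloop) (mul_nonneg (sub_nonneg.2 hkk') hT.le)

theorem mem_loopNonnegLevels_of_isGLB (hL : Continuous (Function.uncurry L))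
    (hc : IsGLB (loopNonnegLevels L) c) : c ∈ loopNonnegLevels L := by
  intro T γ hT hγ hloop
  by_contra! hneg
  set A := action L c T γ
  have hshift : (c - A / (2 * T) - c) * T = -(A / 2) := by
    field_simp
    ring
  obtain ⟨k, hk, -, hlt⟩ := hc.exists_between (show c < c - A / (2 * T) by
    have : A / (2 * T) < 0 := div_neg_of_neg_of_pos hneg (by positivity)
    linarith)
  have := mem_loopNonnegLevels_of_le hL hk hlt.le T γ hT hγ hloop
  rw [action_eq_add_mul hL hT hγ c, hshift] at this
  linarith

theorem exists_mem_actionSet_le_of_neg (hL : Continuous (Function.uncurry L))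
    (hA : A ∈ actionSet L k x x) (hneg : A < 0) (m : ℕ) :
    ∃ C ∈ actionSet L k x x, C ≤ A + m * (A / 2) := by
  induction m with
  | zero => exact ⟨A, hA, by simp⟩
  | succ m ih =>
    obtain ⟨C, hC, hCle⟩ := ih
    obtain ⟨C', hC', hC'le⟩ := exists_mem_actionSet_le_add hL hC hA (ε := -(A / 2)) (by linarith)
    exact ⟨C', hC', by push_cast; linarith⟩

theorem not_bddBelow_actionSet (hL : Continuous (Function.uncurry L))
    (hA : A ∈ actionSet L k x x) (hneg : A < 0) : ¬BddBelow (actionSet L k x x) := by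
  rintro ⟨b, hb⟩
  obtain ⟨m, hm⟩ := exists_nat_gt ((A - b) / -(A / 2))
  rw [div_lt_iff₀ (by linarith)] at hm
  obtain ⟨C, hC, hCle⟩ := exists_mem_actionSet_le_of_neg hL hA hneg m
  linarith [hb hC]

end Lagrangian

open Lagrangian

theorem action_potential_symmetrization_general {n : ℕ}
    (L : EuclideanSpace ℝ (Fin n) → EuclideanSpace ℝ (Fin n) → ℝ)
    (hLcont : Continuous (fun q : EuclideanSpace ℝ (Fin n) × EuclideanSpace ℝ (Fin n) => L q.1 q.2))
    (Act : ℝ → EuclideanSpace ℝ (Fin n) → EuclideanSpace ℝ (Fin n) → Set ℝ)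
    (hAct : ∀ k x y, Act k x y = {A : ℝ | ∃ (T : ℝ) (γ : ℝ → EuclideanSpace ℝ (Fin n)),
      0 < T ∧ ContDiffOn ℝ 1 γ (Icc 0 T) ∧ γ 0 = x ∧ γ T = y ∧
      A = ∫ t in (0:ℝ)..T, (L (γ t) (deriv γ t) + k)})
    (c : ℝ)
    (hc : IsGLB {k : ℝ | ∀ (T : ℝ) (γ : ℝ → EuclideanSpace ℝ (Fin n)),
      0 < T → ContDiffOn ℝ 1 γ (Icc 0 T) → γ 0 = γ T →
      0 ≤ ∫ t in (0:ℝ)..T, (L (γ t) (deriv γ t) + k)} c)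
    (Φ : ℝ → EuclideanSpace ℝ (Fin n) → EuclideanSpace ℝ (Fin n) → ℝ)
    (hΦ : ∀ k x y, Φ k x y = sInf (Act k x y))
    (hfin : ∀ k, c ≤ k → ∀ x y, (Act k x y).Nonempty ∧ BddBelow (Act k x y)) :
    (∀ k, c ≤ k → ∀ x y, 0 ≤ Φ k x y + Φ k y x) ∧
    (∀ k, k < c → ∃ x y : EuclideanSpace ℝ (Fin n), ¬ BddBelow (Act k x y)) := by
  obtain rfl : Act = actionSet L := funext fun k => funext fun x => funext fun y => hAct k x y
  refine ⟨fun k hk x y => ?_, fun k hk => ?_⟩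
  · have hkS := mem_loopNonnegLevels_of_le hLcont (mem_loopNonnegLevels_of_isGLB hLcont hc) hk
    rw [hΦ, hΦ]
    exact Real.sInf_add_sInf_nonneg (hfin k hk x y).1 (hfin k hk y x).1
      fun A hA B hB => add_nonneg_of_mem_actionSet hLcont hkS hA hB
  · have hkS : k ∉ loopNonnegLevels L := fun h => hk.not_ge (hc.1 h)
    simp only [loopNonnegLevels, mem_ofPred_eq, not_forall, not_le] at hkS
    obtain ⟨T, γ, hT, hγ, hloop, hneg⟩ := hkS
    exact ⟨γ 0, γ 0, not_bddBelow_actionSet hLcont ⟨T, γ, hT, hγ, rfl, hloop.symm, rfl⟩ hneg⟩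

/-- For `k ≥ c(L)` the symmetrization of the action potential is nonnegative
(so `d_k(x,y) = Φ_k(x,y) + Φ_k(y,x)` is a pseudo-metric), while for `k < c(L)`
the action is unbounded below (`Φ_k ≡ −∞`) on some pair of points. -/
theorem action_potential_symmetrization {n : ℕ}
    (L : EuclideanSpace ℝ (Fin n) → EuclideanSpace ℝ (Fin n) → ℝ)
    (hLcont : Continuous (fun q : EuclideanSpace ℝ (Fin n) × EuclideanSpace ℝ (Fin n) => L q.1 q.2))
    (hLconv : ∀ x, ConvexOn ℝ univ (L x))
    (hLsuper : ∀ x, ∀ C : ℝ, ∃ R : ℝ, ∀ v : EuclideanSpace ℝ (Fin n), R ≤ ‖v‖ → C * ‖v‖ ≤ L x v)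
    (Act : ℝ → EuclideanSpace ℝ (Fin n) → EuclideanSpace ℝ (Fin n) → Set ℝ)
    (hAct : ∀ k x y, Act k x y = {A : ℝ | ∃ (T : ℝ) (γ : ℝ → EuclideanSpace ℝ (Fin n)),
      0 < T ∧ ContDiffOn ℝ 1 γ (Icc 0 T) ∧ γ 0 = x ∧ γ T = y ∧
      A = ∫ t in (0:ℝ)..T, (L (γ t) (deriv γ t) + k)})
    (c : ℝ)
    (hc : IsGLB {k : ℝ | ∀ (T : ℝ) (γ : ℝ → EuclideanSpace ℝ (Fin n)),
      0 < T → ContDiffOn ℝ 1 γ (Icc 0 T) → γ 0 = γ T →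
      0 ≤ ∫ t in (0:ℝ)..T, (L (γ t) (deriv γ t) + k)} c)
    (Φ : ℝ → EuclideanSpace ℝ (Fin n) → EuclideanSpace ℝ (Fin n) → ℝ)
    (hΦ : ∀ k x y, Φ k x y = sInf (Act k x y))
    (hfin : ∀ k, c ≤ k → ∀ x y, (Act k x y).Nonempty ∧ BddBelow (Act k x y)) :
    (∀ k, c ≤ k → ∀ x y, 0 ≤ Φ k x y + Φ k y x) ∧
    (∀ k, k < c → ∃ x y : EuclideanSpace ℝ (Fin n), ¬ BddBelow (Act k x y)) :=
  action_potential_symmetrization_general L hLcont Act hAct c hc Φ hΦ hfin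
end
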